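/- Let w ∈ W_n lie in the domain of a Knuth-type operator T_{αβ} with {α,β} = {α_{j+1}, α_{j+2}} (i.e., w(j+1) is greater than both or less than both of w(j), w(j+2)). Then T_{αβ}(w), defined as the unique element of {w s_j, w s_{j+1}} lying in D_{βα}(W_n), is single-valued: exactly one of w s_j, w s_{j+1} lies in D_{βα}(W_n). -/

import Mathlib

/-! The theorem reduces to the descent criterion `ℓ(w s_j) < ℓ(w) ↔ w(j+1) < w(j)`, after which
only the relative order of `w(j), w(j+1), w(j+2)` matters. The criterion follows from
`2 ℓ(w) = inv(w) + neg(w)`, where `inv` counts the inversions of `w` as a permutation of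
`{±1, …, ±n}` and `neg` the `i ∈ [1, n]` with `w(i) < 0`. Indeed `s_j` acts on `{±1, …, ±n}` as
two adjacent transpositions and `t_1` as the adjacent transposition of `-1` and `1`, so multiplying
by a generator on the right changes `inv + neg` by exactly `2`, downwards iff the generator is a
descent; and every `w ≠ 1` has a descent, so `inv + neg` is also attained by a word. -/

/-- The signed transposition `s_j` of type `B`: swaps `j ↔ j+1` and `-j ↔ -(j+1)`. -/
def sgen (j : ℕ) : Equiv.Perm ℤ :=
  Equiv.swap (j : ℤ) ((j : ℤ) + 1) * Equiv.swap (-(j : ℤ)) (-((j : ℤ) + 1))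

/-- The sign change `t_j`: swaps `j ↔ -j`, i.e. changes the sign of the `j`-th entry. -/
def tgen (j : ℕ) : Equiv.Perm ℤ := Equiv.swap (j : ℤ) (-(j : ℤ))

/-- The hyperoctahedral group `W_n`: permutations `w` of `{±1, …, ±n}` with `w(-i) = -w(i)`,
realized as permutations of `ℤ` commuting with negation and fixing `i` with `|i| > n`. -/
def Wgrp (n : ℕ) : Set (Equiv.Perm ℤ) :=
  {w | (∀ i : ℤ, w (-i) = - w i) ∧ ∀ i : ℤ, (n : ℤ) < |i| → w i = i}

/-- Coxeter length on `W_n` with respect to the simple reflections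
`s_1, …, s_{n-1}, t_1`: minimal length of a word in these generators. -/
noncomputable def lenB (n : ℕ) (w : Equiv.Perm ℤ) : ℕ :=
  sInf {k | ∃ l : List (Equiv.Perm ℤ), l.length = k ∧
    (∀ g ∈ l, (∃ j : ℕ, 1 ≤ j ∧ j < n ∧ g = sgen j) ∨ g = tgen 1) ∧ l.prod = w}

/-- `v ∈ D_{α_{j+1} α_{j+2}}(W_n)`: `α_{j+1} ∉ τ(v)` and `α_{j+2} ∈ τ(v)`. -/
noncomputable def Dab (n j : ℕ) (v : Equiv.Perm ℤ) : Prop :=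
  ¬ (lenB n (v * sgen j) < lenB n v) ∧ lenB n (v * sgen (j + 1)) < lenB n v

/-- `v ∈ D_{α_{j+2} α_{j+1}}(W_n)`: `α_{j+2} ∉ τ(v)` and `α_{j+1} ∈ τ(v)`. -/
noncomputable def Dba (n j : ℕ) (v : Equiv.Perm ℤ) : Prop :=
  ¬ (lenB n (v * sgen (j + 1)) < lenB n v) ∧ lenB n (v * sgen j) < lenB n v

open Equiv Equiv.Perm Finset

namespace Equiv.Perm
variable {α : Type*} [LinearOrder α]

def inversions (S : Finset α) (w : Perm α) : Finset (α × α) :=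
  (S ×ˢ S).filter fun p => p.1 < p.2 ∧ w p.2 < w p.1

@[simp]
theorem mem_inversions {S : Finset α} {w : Perm α} {x y : α} :
    (x, y) ∈ inversions S w ↔ (x ∈ S ∧ y ∈ S) ∧ x < y ∧ w y < w x := by
  simp [inversions]

theorem swap_lt_swap_iff_of_adjacent {S : Finset α} {a b x y : α} (hab : a < b)
    (hadj : ∀ c ∈ S, ¬(a < c ∧ c < b)) (hx : x ∈ S) (hy : y ∈ S)
    (hxy : ¬(x = a ∧ y = b)) (hyx : ¬(x = b ∧ y = a)) :
    swap a b x < swap a b y ↔ x < y := by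
  have := hadj x hx
  have := hadj y hy
  simp only [swap_apply_def]
  split_ifs <;> grind

/-- `p ↦ (swap a b p.1, swap a b p.2)` matches the inversions of `w` with those of
`w * swap a b` other than `(a, b)`. -/
theorem card_inversions_mul_swap {S : Finset α} {w : Perm α} {a b : α} (ha : a ∈ S) (hb : b ∈ S)
    (hab : a < b) (hadj : ∀ c ∈ S, ¬(a < c ∧ c < b)) (hw : w a < w b) :
    #(inversions S (w * swap a b)) = #(inversions S w) + 1 := by
  have hmem : (a, b) ∈ inversions S (w * swap a b) := by simp [ha, hb, hab, hw]
  have hS : ∀ x ∈ S, swap a b x ∈ S := fun x hx => by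
    rw [swap_apply_def]; split_ifs <;> assumption
  rw [← card_erase_add_one hmem]
  congr 1
  refine card_nbij' (fun p => (swap a b p.1, swap a b p.2)) (fun p => (swap a b p.1, swap a b p.2))
    ?_ ?_ (fun _ _ => by simp) (fun _ _ => by simp)
  · rintro ⟨x, y⟩ hp
    simp only [coe_erase, Set.mem_sdiff, mem_coe, mem_inversions, Set.mem_singleton_iff,
      Prod.mk.injEq, Perm.mul_apply] at hp ⊢
    obtain ⟨⟨⟨hx, hy⟩, hxy, hwxy⟩, hne⟩ := hp
    refine ⟨⟨hS x hx, hS y hy⟩, ?_, hwxy⟩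
    rwa [swap_lt_swap_iff_of_adjacent hab hadj hx hy hne (by grind)]
  · rintro ⟨x, y⟩ hp
    simp only [coe_erase, Set.mem_sdiff, mem_coe, mem_inversions, Set.mem_singleton_iff,
      Prod.mk.injEq, Perm.mul_apply, swap_apply_self] at hp ⊢
    obtain ⟨⟨hx, hy⟩, hxy, hwxy⟩ := hp
    have hne : ¬(x = a ∧ y = b) := fun ⟨hxa, hyb⟩ => (hxa ▸ hyb ▸ hwxy).not_gt hw
    refine ⟨⟨⟨hS x hx, hS y hy⟩, ?_, hwxy⟩, ?_⟩
    · rwa [swap_lt_swap_iff_of_adjacent hab hadj hx hy hne (by grind)]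
    · grind [swap_apply_left, swap_apply_right]

end Equiv.Perm

section

variable {n j : ℕ} {w v : Perm ℤ}

theorem Wgrp.apply_neg (hw : w ∈ Wgrp n) (i : ℤ) : w (-i) = -w i := hw.1 i

theorem Wgrp.apply_zero (hw : w ∈ Wgrp n) : w 0 = 0 := by
  have := hw.1 0
  simp only [neg_zero] at this
  omega

theorem Wgrp.apply_ne_zero (hw : w ∈ Wgrp n) {i : ℤ} (hi : i ≠ 0) : w i ≠ 0 :=
  fun h => hi (w.injective (h.trans (Wgrp.apply_zero hw).symm))

theorem Wgrp.apply_le (hw : w ∈ Wgrp n) {i : ℤ} (hi : 1 ≤ i) (hin : i ≤ n) : w i ≤ n := by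
  by_contra! hlt
  have := w.injective (hw.2 (w i) (by rw [abs_of_pos (by omega)]; exact hlt))
  omega

theorem Wgrp.one_mem : (1 : Perm ℤ) ∈ Wgrp n := by
  constructor <;> intro i <;> simp

theorem Wgrp.mul_mem (hw : w ∈ Wgrp n) (hv : v ∈ Wgrp n) : w * v ∈ Wgrp n := by
  refine ⟨fun i => ?_, fun i hi => ?_⟩
  · rw [Perm.mul_apply, Perm.mul_apply, hv.1, hw.1]
  · rw [Perm.mul_apply, hv.2 i hi, hw.2 i hi]

theorem Wgrp.list_prod_mem {l : List (Perm ℤ)} (hl : ∀ g ∈ l, g ∈ Wgrp n) : l.prod ∈ Wgrp n := by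
  induction l with
  | nil => exact Wgrp.one_mem
  | cons g l ih =>
    rw [List.prod_cons]
    exact Wgrp.mul_mem (hl g (by simp)) (ih fun g hg => hl g (by simp [hg]))

theorem sgen_apply (hj : 1 ≤ j) (i : ℤ) :
    sgen j i = if i = j then (j : ℤ) + 1 else if i = (j : ℤ) + 1 then (j : ℤ)
      else if i = -(j : ℤ) then -((j : ℤ) + 1) else if i = -((j : ℤ) + 1) then -(j : ℤ) else i := by
  simp only [sgen, Perm.mul_apply, swap_apply_def]
  split_ifs <;> omega

theorem sgen_apply_of_pos {i : ℤ} (hi : 0 < i) : sgen j i = swap (j : ℤ) (j + 1) i := by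
  rw [sgen, Perm.mul_apply]
  congr 1
  exact swap_apply_of_ne_of_ne (by omega) (by omega)

theorem sgen_eq_swap_mul_swap (j : ℕ) :
    sgen j = swap (j : ℤ) (j + 1) * swap (-((j : ℤ) + 1)) (-j) := by
  rw [sgen, swap_comm (-(j : ℤ))]

theorem sgen_mul_self (hj : 1 ≤ j) : sgen j * sgen j = 1 := by
  ext i
  simp only [Perm.mul_apply, Perm.one_apply, sgen_apply hj]
  split_ifs <;> omega

theorem sgen_sgen_apply (hj : 1 ≤ j) (i : ℤ) : sgen j (sgen j i) = i := by
  rw [← Perm.mul_apply, sgen_mul_self hj, Perm.one_apply]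

theorem sgen_mem_Wgrp (hj : 1 ≤ j) (hjn : j < n) : sgen j ∈ Wgrp n := by
  refine ⟨fun i => ?_, fun i hi => ?_⟩ <;> simp only [sgen_apply hj] <;>
    split_ifs <;> first | omega | (rcases abs_cases i with h | h <;> omega)

theorem tgen_mem_Wgrp (hn : 1 ≤ n) : tgen 1 ∈ Wgrp n := by
  refine ⟨fun i => ?_, fun i hi => ?_⟩ <;> simp only [tgen, swap_apply_def, Nat.cast_one] <;>
    split_ifs <;> first | omega | (rcases abs_cases i with h | h <;> omega)

theorem mul_sgen_apply_left (hj : 1 ≤ j) : (w * sgen j) j = w (j + 1) := by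
  rw [Perm.mul_apply, sgen_apply_of_pos (by omega), swap_apply_left]

theorem mul_sgen_apply_right : (w * sgen j) (j + 1) = w j := by
  rw [Perm.mul_apply, sgen_apply_of_pos (by omega), swap_apply_right]

theorem mul_sgen_apply_of_ne {i : ℤ} (hi : 0 < i) (hij : i ≠ j) (hij' : i ≠ j + 1) :
    (w * sgen j) i = w i := by
  rw [Perm.mul_apply, sgen_apply_of_pos hi, swap_apply_of_ne_of_ne hij hij']

theorem mul_tgen_apply_one (hw : w ∈ Wgrp n) : (w * tgen 1) 1 = -w 1 := by
  rw [Perm.mul_apply, tgen, Nat.cast_one, swap_apply_left, Wgrp.apply_neg hw]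

theorem Wgrp.eq_one_of_forall_lt (hw : w ∈ Wgrp n) (h1 : 0 < w 1)
    (hasc : ∀ j : ℕ, 1 ≤ j → j < n → w j < w (j + 1)) : w = 1 := by
  have hasc' : ∀ i : ℤ, 1 ≤ i → i < n → w i < w (i + 1) := fun i hi hin => by
    lift i to ℕ using by omega
    exact hasc i (by omega) (by omega)
  have hge : ∀ i : ℤ, 1 ≤ i → i ≤ n → i ≤ w i := by
    intro i hi
    induction i, hi using Int.leInduction with
    | base => intro; omega
    | succ i hi ih =>
      intro hin
      have := hasc' i hi (by omega)
      have := ih (by omega)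
      omega
  have hle : ∀ i : ℤ, i ≤ n → 1 ≤ i → w i ≤ i := by
    intro i hi
    induction i, hi using Int.leInductionDown with
    | base => exact fun h => Wgrp.apply_le hw h le_rfl
    | pred i hi ih =>
      intro hi1
      have := ih (by omega)
      have := hasc' (i - 1) hi1 (by omega)
      rw [sub_add_cancel] at this
      omega
  ext i
  rw [Perm.one_apply]
  rcases lt_or_ge (n : ℤ) |i| with hi | hi
  · exact hw.2 i hi
  rcases lt_trichotomy i 0 with hneg | rfl | hpos
  · have := hge (-i) (by omega) (by rw [abs_of_neg hneg] at hi; omega)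
    have := hle (-i) (by rw [abs_of_neg hneg] at hi; omega) (by omega)
    rw [Wgrp.apply_neg hw] at *
    omega
  · exact Wgrp.apply_zero hw
  · rw [abs_of_pos hpos] at hi
    exact le_antisymm (hle i hi (by omega)) (hge i (by omega) hi)

noncomputable def signedRange (n : ℕ) : Finset ℤ := (Icc (-(n : ℤ)) n).erase 0

noncomputable def negCount (n : ℕ) (w : Perm ℤ) : ℕ := #{i ∈ Icc (1 : ℤ) n | w i < 0}

noncomputable def doubledLength (n : ℕ) (w : Perm ℤ) : ℕ :=
  #(inversions (signedRange n) w) + negCount n w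

theorem mem_signedRange {i : ℤ} : i ∈ signedRange n ↔ i ≠ 0 ∧ -(n : ℤ) ≤ i ∧ i ≤ n := by
  simp [signedRange]

theorem card_inversions_mul_sgen (hw : w ∈ Wgrp n) (hj : 1 ≤ j) (hjn : j < n)
    (h : w j < w (j + 1)) :
    #(inversions (signedRange n) (w * sgen j)) = #(inversions (signedRange n) w) + 2 := by
  rw [sgen_eq_swap_mul_swap, ← mul_assoc,
    card_inversions_mul_swap (mem_signedRange.2 (by omega))
      (mem_signedRange.2 (by omega)) (by omega) (fun _ _ => by omega),
    card_inversions_mul_swap (mem_signedRange.2 (by omega))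
      (mem_signedRange.2 (by omega)) (by omega) (fun _ _ => by omega) h]
  rw [Perm.mul_apply, Perm.mul_apply, swap_apply_of_ne_of_ne (by omega) (by omega),
    swap_apply_of_ne_of_ne (by omega) (by omega), Wgrp.apply_neg hw, Wgrp.apply_neg hw]
  omega

theorem card_inversions_mul_tgen (hw : w ∈ Wgrp n) (hn : 1 ≤ n) (h : 0 < w 1) :
    #(inversions (signedRange n) (w * tgen 1)) = #(inversions (signedRange n) w) + 1 := by
  rw [tgen, Nat.cast_one, swap_comm]
  refine card_inversions_mul_swap (mem_signedRange.2 (by omega))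
    (mem_signedRange.2 (by omega)) (by omega)
    (fun c hc => by have := mem_signedRange.1 hc; omega) ?_
  rw [Wgrp.apply_neg hw]
  omega

theorem negCount_mul_sgen (hj : 1 ≤ j) (hjn : j < n) : negCount n (w * sgen j) = negCount n w := by
  have hmaps : ∀ i ∈ Icc (1 : ℤ) n, sgen j i ∈ Icc (1 : ℤ) n := fun i hi => by
    rw [mem_Icc] at hi ⊢
    rw [sgen_apply_of_pos (by omega), swap_apply_def]
    split_ifs <;> omega
  refine card_nbij' (sgen j) (sgen j) (fun i hi => ?_) (fun i hi => ?_)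
    (fun i _ => sgen_sgen_apply hj i) (fun i _ => sgen_sgen_apply hj i)
  · rw [mem_coe, mem_filter] at hi ⊢
    exact ⟨hmaps i hi.1, hi.2⟩
  · rw [mem_coe, mem_filter] at hi ⊢
    rw [Perm.mul_apply, sgen_sgen_apply hj]
    exact ⟨hmaps i hi.1, hi.2⟩

theorem negCount_mul_tgen (hw : w ∈ Wgrp n) (hn : 1 ≤ n) (h : 0 < w 1) :
    negCount n (w * tgen 1) = negCount n w + 1 := by
  have hneg := Wgrp.apply_neg hw 1
  rw [negCount, negCount, ← card_insert_of_notMem (a := (1 : ℤ)) (by simp; omega)]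
  congr 1
  ext i
  simp only [mem_filter, mem_insert, mem_Icc, Perm.mul_apply, tgen, Nat.cast_one, swap_apply_def]
  split_ifs <;> subst_vars <;> omega

theorem doubledLength_mul_sgen (hw : w ∈ Wgrp n) (hj : 1 ≤ j) (hjn : j < n)
    (h : w j < w (j + 1)) : doubledLength n (w * sgen j) = doubledLength n w + 2 := by
  rw [doubledLength, doubledLength, card_inversions_mul_sgen hw hj hjn h, negCount_mul_sgen hj hjn]
  omega

theorem doubledLength_mul_tgen (hw : w ∈ Wgrp n) (hn : 1 ≤ n) (h : 0 < w 1) :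
    doubledLength n (w * tgen 1) = doubledLength n w + 2 := by
  rw [doubledLength, doubledLength, card_inversions_mul_tgen hw hn h, negCount_mul_tgen hw hn h]
  omega

theorem doubledLength_one : doubledLength n 1 = 0 := by
  rw [doubledLength, negCount, add_eq_zero, card_eq_zero, card_eq_zero, filter_eq_empty_iff]
  constructor
  · ext ⟨x, y⟩
    simp only [mem_inversions, Perm.one_apply, notMem_empty, iff_false]
    omega
  · intro i hi
    rw [mem_Icc] at hi
    rw [Perm.one_apply]
    omega

theorem doubledLength_mul_sgen_add_two (hw : w ∈ Wgrp n) (hj : 1 ≤ j) (hjn : j < n)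
    (h : w (j + 1) < w j) : doubledLength n (w * sgen j) + 2 = doubledLength n w := by
  have := doubledLength_mul_sgen (Wgrp.mul_mem hw (sgen_mem_Wgrp hj hjn)) hj hjn
    (by rwa [mul_sgen_apply_left hj, mul_sgen_apply_right])
  rwa [mul_assoc, sgen_mul_self hj, mul_one, eq_comm] at this

theorem doubledLength_mul_tgen_add_two (hw : w ∈ Wgrp n) (hn : 1 ≤ n) (h : w 1 < 0) :
    doubledLength n (w * tgen 1) + 2 = doubledLength n w := by
  have hwt := Wgrp.mul_mem hw (tgen_mem_Wgrp hn)
  have := doubledLength_mul_tgen hwt hn (by rw [mul_tgen_apply_one hw]; omega)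
  rwa [mul_assoc, tgen, swap_mul_self, mul_one, eq_comm] at this

def IsSimpleReflection (n : ℕ) (g : Perm ℤ) : Prop :=
  (∃ j : ℕ, 1 ≤ j ∧ j < n ∧ g = sgen j) ∨ g = tgen 1

theorem IsSimpleReflection.mem_Wgrp {g : Perm ℤ} (hn : 1 ≤ n) (hg : IsSimpleReflection n g) :
    g ∈ Wgrp n := by
  rcases hg with ⟨j, hj, hjn, rfl⟩ | rfl
  exacts [sgen_mem_Wgrp hj hjn, tgen_mem_Wgrp hn]

theorem IsSimpleReflection.mul_self {g : Perm ℤ} (hg : IsSimpleReflection n g) : g * g = 1 := by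
  rcases hg with ⟨j, hj, -, rfl⟩ | rfl
  exacts [sgen_mul_self hj, swap_mul_self _ _]

theorem doubledLength_mul_of_isSimpleReflection {g : Perm ℤ} (hw : w ∈ Wgrp n) (hn : 1 ≤ n)
    (hg : IsSimpleReflection n g) :
    doubledLength n (w * g) = doubledLength n w + 2 ∨
      doubledLength n (w * g) + 2 = doubledLength n w := by
  rcases hg with ⟨j, hj, hjn, rfl⟩ | rfl
  · have hne : w j ≠ w (j + 1) := w.injective.ne (by omega)
    rcases lt_or_gt_of_ne hne with h | h
    exacts [Or.inl (doubledLength_mul_sgen hw hj hjn h),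
      Or.inr (doubledLength_mul_sgen_add_two hw hj hjn h)]
  · rcases lt_or_gt_of_ne (Wgrp.apply_ne_zero hw one_ne_zero) with h | h
    exacts [Or.inr (doubledLength_mul_tgen_add_two hw hn h), Or.inl (doubledLength_mul_tgen hw hn h)]

theorem exists_isSimpleReflection_doubledLength_mul_add_two (hw : w ∈ Wgrp n) (hn : 1 ≤ n)
    (hne : w ≠ 1) :
    ∃ g, IsSimpleReflection n g ∧ doubledLength n (w * g) + 2 = doubledLength n w := by
  by_contra! hnone
  refine hne (Wgrp.eq_one_of_forall_lt hw ?_ fun j hj hjn => ?_)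
  · refine (lt_or_gt_of_ne (Wgrp.apply_ne_zero hw one_ne_zero)).resolve_left fun h => ?_
    exact hnone _ (Or.inr rfl) (doubledLength_mul_tgen_add_two hw hn h)
  · have hne : w j ≠ w (j + 1) := w.injective.ne (by omega)
    refine (lt_or_gt_of_ne hne).resolve_right fun h => ?_
    exact hnone _ (Or.inl ⟨j, hj, hjn, rfl⟩) (doubledLength_mul_sgen_add_two hw hj hjn h)

theorem exists_word_of_doubledLength (hw : w ∈ Wgrp n) (hn : 1 ≤ n) :
    ∃ l : List (Perm ℤ), (∀ g ∈ l, IsSimpleReflection n g) ∧ l.prod = w ∧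
      2 * l.length = doubledLength n w := by
  induction hd : doubledLength n w using Nat.strong_induction_on generalizing w with
  | _ d ih =>
    by_cases h1 : w = 1
    · subst h1
      exact ⟨[], by simp, rfl, by rw [← hd, doubledLength_one]; rfl⟩
    obtain ⟨g, hg, hlt⟩ := exists_isSimpleReflection_doubledLength_mul_add_two hw hn h1
    obtain ⟨l, hl, hprod, hlen⟩ :=
      ih _ (by omega) (Wgrp.mul_mem hw (hg.mem_Wgrp hn)) rfl
    refine ⟨l ++ [g], fun x hx => ?_, ?_, ?_⟩
    · rcases List.mem_append.1 hx with hx | hx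
      exacts [hl x hx, List.mem_singleton.1 hx ▸ hg]
    · rw [List.prod_append, hprod, List.prod_singleton, mul_assoc, hg.mul_self, mul_one]
    · rw [List.length_append, List.length_singleton]
      omega

theorem doubledLength_prod_le (hn : 1 ≤ n) {l : List (Perm ℤ)}
    (hl : ∀ g ∈ l, IsSimpleReflection n g) : doubledLength n l.prod ≤ 2 * l.length := by
  induction l using List.reverseRecOn with
  | nil => simp [doubledLength_one]
  | append_singleton l g ih =>
    have hl' : ∀ x ∈ l, IsSimpleReflection n x := fun x hx => hl x (by simp [hx])
    have hmem := Wgrp.list_prod_mem fun x hx => (hl' x hx).mem_Wgrp hn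
    have := doubledLength_mul_of_isSimpleReflection hmem hn (hl g (by simp))
    have := ih hl'
    rw [List.prod_append, List.prod_singleton, List.length_append, List.length_singleton]
    omega

theorem two_mul_lenB (hw : w ∈ Wgrp n) (hn : 1 ≤ n) : 2 * lenB n w = doubledLength n w := by
  obtain ⟨l, hl, hprod, hlen⟩ := exists_word_of_doubledLength hw hn
  have hmem : l.length ∈ {k | ∃ l : List (Perm ℤ), l.length = k ∧
      (∀ g ∈ l, IsSimpleReflection n g) ∧ l.prod = w} := ⟨l, rfl, hl, hprod⟩
  obtain ⟨l', hlen', hl', hprod'⟩ := Nat.sInf_mem ⟨_, hmem⟩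
  have hle := Nat.sInf_le hmem
  have hge := doubledLength_prod_le hn hl'
  rw [hprod'] at hge
  have hlenB : lenB n w = sInf {k | ∃ l : List (Perm ℤ), l.length = k ∧
      (∀ g ∈ l, IsSimpleReflection n g) ∧ l.prod = w} := rfl
  omega

theorem lenB_mul_sgen_lt_iff (hw : w ∈ Wgrp n) (hj : 1 ≤ j) (hjn : j < n) :
    lenB n (w * sgen j) < lenB n w ↔ w (j + 1) < w j := by
  have hn : 1 ≤ n := by omega
  have h₁ := two_mul_lenB hw hn
  have h₂ := two_mul_lenB (Wgrp.mul_mem hw (sgen_mem_Wgrp hj hjn)) hn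
  have hne : w j ≠ w (j + 1) := w.injective.ne (by omega)
  rcases lt_or_gt_of_ne hne with h | h
  · have := doubledLength_mul_sgen hw hj hjn h
    constructor <;> intro <;> omega
  · have := doubledLength_mul_sgen_add_two hw hj hjn h
    constructor <;> intro <;> omega

theorem lenB_mul_sgen_succ_lt_iff (hw : w ∈ Wgrp n) (hj : 1 ≤ j) (hjn : j + 1 < n) :
    lenB n (w * sgen (j + 1)) < lenB n w ↔ w (j + 2) < w (j + 1) := by
  rw [lenB_mul_sgen_lt_iff hw (by omega) hjn]
  push_cast
  ring_nf

theorem Dab_iff (hw : w ∈ Wgrp n) (hj : 1 ≤ j) (hjn : j + 2 ≤ n) :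
    Dab n j w ↔ ¬w (j + 1) < w j ∧ w (j + 2) < w (j + 1) := by
  rw [Dab, lenB_mul_sgen_lt_iff hw hj (by omega), lenB_mul_sgen_succ_lt_iff hw hj (by omega)]

theorem Dba_iff (hw : w ∈ Wgrp n) (hj : 1 ≤ j) (hjn : j + 2 ≤ n) :
    Dba n j w ↔ ¬w (j + 2) < w (j + 1) ∧ w (j + 1) < w j := by
  rw [Dba, lenB_mul_sgen_lt_iff hw hj (by omega), lenB_mul_sgen_succ_lt_iff hw hj (by omega)]

end

/-- If `w` lies in the domain of `T_{αβ}` with `{α,β} = {α_{j+1}, α_{j+2}}`, then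
exactly one of `w s_j`, `w s_{j+1}` lies in `D_{βα}(W_n)`: `T_{αβ}` is
single-valued. -/
theorem Tab_single_valued (n j : ℕ) (hj1 : 1 ≤ j) (hj2 : j + 2 ≤ n)
    (w : Equiv.Perm ℤ) (hw : w ∈ Wgrp n) :
    (Dab n j w → Xor' (Dba n j (w * sgen j)) (Dba n j (w * sgen (j + 1)))) ∧
    (Dba n j w → Xor' (Dab n j (w * sgen j)) (Dab n j (w * sgen (j + 1)))) := by
  have hw₁ := Wgrp.mul_mem hw (sgen_mem_Wgrp hj1 (by omega))
  have hw₂ := Wgrp.mul_mem hw (sgen_mem_Wgrp (j := j + 1) (by omega) (by omega))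
  rw [Dab_iff hw hj1 hj2, Dba_iff hw hj1 hj2, Dab_iff hw₁ hj1 hj2, Dba_iff hw₁ hj1 hj2,
    Dab_iff hw₂ hj1 hj2, Dba_iff hw₂ hj1 hj2]
  have h₁ : (w * sgen (j + 1)) j = w j :=
    mul_sgen_apply_of_ne (by omega) (by push_cast; omega) (by push_cast; omega)
  have h₂ : (w * sgen (j + 1)) (j + 1) = w (j + 2) := by
    simpa [add_assoc, one_add_one_eq_two] using mul_sgen_apply_left (w := w) (j := j + 1) (by omega)
  have h₃ : (w * sgen (j + 1)) (j + 2) = w (j + 1) := by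
    simpa [add_assoc, one_add_one_eq_two] using mul_sgen_apply_right (w := w) (j := j + 1)
  have h₄ : (w * sgen j) (j + 2) = w (j + 2) := mul_sgen_apply_of_ne (by omega) (by simp) (by omega)
  rw [mul_sgen_apply_left hj1, mul_sgen_apply_right, h₁, h₂, h₃, h₄]
  have h01 : w j ≠ w (j + 1) := w.injective.ne (by omega)
  have h02 : w j ≠ w (j + 2) := w.injective.ne (by omega)
  have h12 : w (j + 1) ≠ w (j + 2) := w.injective.ne (by omega)
  simp only [Xor', xor_def]
  omega
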